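/- arXiv:1301.2030 — 8 statements merged into one kernel-verified Lean document; each statement's English description precedes it below -/
import Mathlib

section
/- Let A be an n×n complex Hermitian matrix (n ≥ 2), let 1 ≤ l < m ≤ n, and let S(A,x) := x* A x. Let φ^J ∈ [−π,π] be any minimizer of φ ↦ S(A, r_{l,m}(π/4,φ)) over [−π,π], let θ̃ ∈ [−π/2,π/2] be any minimizer of θ ↦ S(A, r_{l,m}(θ,φ^J)) over [−π/2,π/2], and set θ^J = θ̃ if |θ̃| ≤ π/4 and θ^J = θ̃ − sign(θ̃)·π/2 otherwise. Then the (l,m) entry of R_{l,m}(θ^J,φ^J)* · A · R_{l,m}(θ^J,φ^J) equals zero. -/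
open Matrix Real Complex Finset Filter

noncomputable section

/-- The `n × n` complex plane-rotation matrix `R_{l,m}(θ,φ)`: equal to the identity except
that its `(l,l)` and `(m,m)` entries equal `cos θ`, its `(l,m)` entry equals
`e^{-iφ}·sin θ`, and its `(m,l)` entry equals `-e^{iφ}·sin θ`. -/
def planeRot (n : ℕ) (l m : Fin n) (θ φ : ℝ) : Matrix (Fin n) (Fin n) ℂ :=
  fun i j =>
    if i = l ∧ j = l then (Real.cos θ : ℂ)
    else if i = m ∧ j = m then (Real.cos θ : ℂ)
    else if i = l ∧ j = m then Complex.exp (-(φ : ℂ) * Complex.I) * (Real.sin θ : ℂ)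
    else if i = m ∧ j = l then -(Complex.exp ((φ : ℂ) * Complex.I) * (Real.sin θ : ℂ))
    else if i = j then 1 else 0

/-- `r_{l,m}(θ,φ)`: the `l`-th column of `R_{l,m}(θ,φ)`. -/
def rotCol (n : ℕ) (l m : Fin n) (θ φ : ℝ) : Fin n → ℂ :=
  fun i => planeRot n l m θ φ i l

/-- `P(A)`: the Frobenius norm of the strictly upper-triangular part of `A`. -/
def offP {n : ℕ} (A : Matrix (Fin n) (Fin n) ℂ) : ℝ :=
  Real.sqrt (∑ l, ∑ m, if l < m then ‖A l m‖ ^ 2 else 0)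

/-- The Frobenius norm of a matrix. -/
def frob {n : ℕ} (A : Matrix (Fin n) (Fin n) ℂ) : ℝ :=
  Real.sqrt (∑ i, ∑ j, ‖A i j‖ ^ 2)

/-- `B` is the result of an `η`-accurate Jacobi rotation of the Hermitian matrix `A`
at the pair `(l,m)`. -/
def JacobiStep {n : ℕ} (η : ℝ) (l m : Fin n) (A B : Matrix (Fin n) (Fin n) ℂ) : Prop :=
  ∃ θh φh ηφ ηθ : ℝ,
    |θh| ≤ π / 4 ∧ |ηφ| ≤ η ∧ |ηθ| ≤ η ∧
    φh = -Complex.arg (A l m) + ηφ ∧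
    ((A l l ≠ A m m ∧
        θh = (1 / 2) * Real.arctan (2 * ‖A l m‖ * Real.cos ηφ /
              ((A m m).re - (A l l).re)) + ηθ) ∨
      (A l l = A m m ∧ (θh = 0 ∨ θh = π / 4 ∨ θh = -(π / 4)))) ∧
    B = (planeRot n l m θh φh)ᴴ * A * planeRot n l m θh φh

/-- The pairs of one cyclic Jacobi sweep, in row (lexicographic) order
`(1,2),(1,3),…,(1,n),(2,3),…,(n−1,n)`. -/
def sweepList (n : ℕ) : List (Fin n × Fin n) :=
  (List.finRange n).flatMap fun l =>
    (List.finRange n).filterMap fun m => if l < m then some (l, m) else none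

/-!
Only the `2 × 2` block `[[a, c], [c̄, d]]` of `A` at `(l, m)` matters. With `w = e^{iφ} c` and
`α = (a - d) / 2`, the objective is `S(A, r(θ, φ)) = (a + d) / 2 + α cos 2θ - Re w · sin 2θ`, and the
`(l, m)` entry of `Rᴴ A R` is `e^{-iφ} (α sin 2θ + Re w · cos 2θ + i Im w)`.
At `θ = π / 4` the first line search maximizes `Re w` over all phases, which forces `w = |c|`.
The second one minimizes `α cos t - |c| sin t` over a full period `t = 2θ`, so the derivative
`α sin t + |c| cos t` vanishes there; replacing `θ` by `θ ∓ π / 2` only changes its sign.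
-/

open ComplexConjugate

theorem Matrix.conjTranspose_mul_mul_apply {ι R : Type*} [Fintype ι] [CommSemiring R] [StarRing R]
    (M A : Matrix ι ι R) (i j : ι) :
    (Mᴴ * A * M) i j = star (Mᵀ i) ⬝ᵥ A *ᵥ Mᵀ j := by
  rw [Matrix.mul_assoc, Matrix.mul_apply']
  rfl

theorem Matrix.star_single_add_single_dotProduct_mulVec {ι R : Type*} [Fintype ι] [DecidableEq ι]
    [CommSemiring R] [StarRing R] (A : Matrix ι ι R) (l m : ι) (u v p q : R) :
    star (Pi.single l u + Pi.single m v) ⬝ᵥ A *ᵥ (Pi.single l p + Pi.single m q) =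
      star u * (A l l * p + A l m * q) + star v * (A m l * p + A m m * q) := by
  simp only [star_add, Pi.star_single, mulVec_add, mulVec_single, op_smul_eq_smul, dotProduct_add,
    dotProduct_smul, add_dotProduct, single_dotProduct, col_apply, smul_eq_mul]
  ring

theorem Complex.star_exp_ofReal_mul_I (φ : ℝ) : star (exp (φ * I)) = exp (-φ * I) := by
  rw [Complex.star_def, ← Complex.exp_conj]
  simp

theorem Complex.exp_neg_ofReal_mul_I_mul_exp (φ : ℝ) : exp (-φ * I) * exp (φ * I) = 1 := by
  rw [← Complex.exp_add]
  simp

theorem Complex.exp_neg_ofReal_mul_I_mul_conj (φ : ℝ) (z : ℂ) :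
    exp (-φ * I) * conj z = (exp (φ * I) * z).re - (exp (φ * I) * z).im * I := by
  rw [← star_exp_ofReal_mul_I, ← Complex.star_def, ← star_mul']
  generalize exp (φ * I) * z = w
  apply Complex.ext <;> simp

theorem Complex.exp_ofReal_mul_I_mul_eq_norm_of_isMaxOn {c : ℂ} {φ₀ : ℝ}
    (h : IsMaxOn (fun φ : ℝ => (exp (φ * I) * c).re) (Set.Icc (-π) π) φ₀) :
    exp (φ₀ * I) * c = ‖c‖ := by
  have hnorm : ‖exp (φ₀ * I) * c‖ = ‖c‖ := by rw [norm_mul, norm_exp_ofReal_mul_I, one_mul]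
  have hattained : exp ((-arg c : ℝ) * I) * c = ‖c‖ := by
    conv_lhs => rw [← norm_mul_exp_arg_mul_I c, mul_left_comm, ← exp_add]
    simp
  have hle : ‖c‖ ≤ (exp (φ₀ * I) * c).re := by
    have := isMaxOn_iff.mp h _ ⟨neg_le_neg (arg_le_pi c), neg_le.mp (neg_pi_lt_arg c).le⟩
    rwa [hattained, ofReal_re] at this
  have hre : (exp (φ₀ * I) * c).re = ‖exp (φ₀ * I) * c‖ :=
    le_antisymm (re_le_norm _) (hnorm ▸ hle)
  rw [eq_re_of_ofReal_le (re_eq_norm.mp hre), hre, hnorm]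

theorem mul_sin_add_mul_cos_eq_zero_of_isMinOn {a b t₀ : ℝ}
    (h : IsMinOn (fun t => a * Real.cos t - b * Real.sin t) (Set.Icc (-π) π) t₀) :
    a * Real.sin t₀ + b * Real.cos t₀ = 0 := by
  have hre (t : ℝ) : (exp (t * I) * -(a + b * I)).re = -(a * Real.cos t - b * Real.sin t) := by
    simp only [mul_neg, neg_re, mul_re, exp_ofReal_mul_I_re, exp_ofReal_mul_I_im, add_re, add_im,
      mul_im, ofReal_re, ofReal_im, I_re, I_im]
    ring
  have hmax : IsMaxOn (fun t : ℝ => (exp (t * I) * -(a + b * I)).re) (Set.Icc (-π) π) t₀ := by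
    simpa only [hre] using h.neg
  have him := congrArg im (exp_ofReal_mul_I_mul_eq_norm_of_isMaxOn hmax)
  simp only [mul_neg, neg_im, mul_im, exp_ofReal_mul_I_re, exp_ofReal_mul_I_im, add_re, add_im,
    mul_re, ofReal_re, ofReal_im, I_re, I_im] at him
  linarith

section PlaneRotation

variable {n : ℕ} {A : Matrix (Fin n) (Fin n) ℂ} {l m : Fin n}

theorem planeRot_transpose_apply_left (hlm : l ≠ m) (θ φ : ℝ) :
    (planeRot n l m θ φ)ᵀ l =
      Pi.single l (Real.cos θ : ℂ) + Pi.single m (-(exp (φ * I) * Real.sin θ)) := by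
  ext i
  by_cases hl : i = l <;> by_cases hm : i = m <;> simp_all [planeRot]

theorem planeRot_transpose_apply_right (hlm : l ≠ m) (θ φ : ℝ) :
    (planeRot n l m θ φ)ᵀ m =
      Pi.single l (exp (-φ * I) * Real.sin θ) + Pi.single m (Real.cos θ : ℂ) := by
  ext i
  by_cases hl : i = l <;> by_cases hm : i = m <;> simp_all [planeRot, Ne.symm hlm]

theorem re_star_rotCol_dotProduct_mulVec_rotCol (hA : A.IsHermitian) (hlm : l ≠ m) (θ φ : ℝ) :
    (star (rotCol n l m θ φ) ⬝ᵥ A *ᵥ rotCol n l m θ φ).re =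
      ((A l l).re + (A m m).re) / 2 + ((A l l).re - (A m m).re) / 2 * Real.cos (2 * θ)
        - (exp (φ * I) * A l m).re * Real.sin (2 * θ) := by
  have hll : A l l = ((A l l).re : ℂ) := (hA.coe_re_apply_self l).symm
  have hmm : A m m = ((A m m).re : ℂ) := (hA.coe_re_apply_self m).symm
  set w := exp (φ * I) * A l m
  have hw : exp (φ * I) * A l m = w.re + w.im * I := (re_add_im w).symm
  have hw' : exp (-φ * I) * conj (A l m) = w.re - w.im * I := exp_neg_ofReal_mul_I_mul_conj φ _
  have hpy : (Real.sin θ : ℂ) ^ 2 + (Real.cos θ : ℂ) ^ 2 = 1 := by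
    exact_mod_cast Real.sin_sq_add_cos_sq θ
  rw [← Complex.ofReal_re (_ - _)]
  congr 1
  rw [show rotCol n l m θ φ = (planeRot n l m θ φ)ᵀ l from rfl, planeRot_transpose_apply_left hlm,
    Matrix.star_single_add_single_dotProduct_mulVec, hll, hmm, ← hA.apply m l, star_neg,
    star_mul', star_exp_ofReal_mul_I]
  rw [Real.cos_two_mul, Real.sin_two_mul]
  set s := Real.sin θ
  set c := Real.cos θ
  push_cast
  simp only [Complex.star_def, Complex.conj_ofReal]
  linear_combination (A m m).re * (s : ℂ) ^ 2 * exp_neg_ofReal_mul_I_mul_exp φ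
    - s * c * hw - s * c * hw' + (A m m).re * hpy

theorem planeRot_conjTranspose_mul_mul_apply (hA : A.IsHermitian) (hlm : l ≠ m) (θ φ : ℝ) :
    ((planeRot n l m θ φ)ᴴ * A * planeRot n l m θ φ) l m =
      exp (-φ * I) * (((((A l l).re - (A m m).re) / 2 * Real.sin (2 * θ)
        + (exp (φ * I) * A l m).re * Real.cos (2 * θ) : ℝ) : ℂ)
        + (exp (φ * I) * A l m).im * I) := by
  have hll : A l l = ((A l l).re : ℂ) := (hA.coe_re_apply_self l).symm
  have hmm : A m m = ((A m m).re : ℂ) := (hA.coe_re_apply_self m).symm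
  set w := exp (φ * I) * A l m
  have hw : exp (φ * I) * A l m = w.re + w.im * I := (re_add_im w).symm
  have hw' : exp (-φ * I) * conj (A l m) = w.re - w.im * I := exp_neg_ofReal_mul_I_mul_conj φ _
  have hpy : (Real.sin θ : ℂ) ^ 2 + (Real.cos θ : ℂ) ^ 2 = 1 := by
    exact_mod_cast Real.sin_sq_add_cos_sq θ
  rw [Matrix.conjTranspose_mul_mul_apply, planeRot_transpose_apply_left hlm,
    planeRot_transpose_apply_right hlm, Matrix.star_single_add_single_dotProduct_mulVec,
    hll, hmm, ← hA.apply m l, star_neg, star_mul', star_exp_ofReal_mul_I]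
  rw [Real.cos_two_mul', Real.sin_two_mul]
  set s := Real.sin θ
  set c := Real.cos θ
  push_cast
  simp only [Complex.star_def, Complex.conj_ofReal]
  linear_combination -(A l m) * (c : ℂ) ^ 2 * exp_neg_ofReal_mul_I_mul_exp φ
    + exp (-φ * I) * (c : ℂ) ^ 2 * hw - exp (-φ * I) * (s : ℂ) ^ 2 * hw'
    + exp (-φ * I) * w.im * I * hpy

end PlaneRotation

theorem obnsla_two_line_searches_zero_entry_general
    {n : ℕ} (A : Matrix (Fin n) (Fin n) ℂ) (hA : A.IsHermitian)
    (l m : Fin n) (hlm : l < m)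
    (φJ θt θJ : ℝ)
    (hφJmin : ∀ φ ∈ Set.Icc (-π) π,
      (star (rotCol n l m (π / 4) φJ) ⬝ᵥ A.mulVec (rotCol n l m (π / 4) φJ)).re ≤
      (star (rotCol n l m (π / 4) φ) ⬝ᵥ A.mulVec (rotCol n l m (π / 4) φ)).re)
    (hθtmin : ∀ θ ∈ Set.Icc (-(π / 2)) (π / 2),
      (star (rotCol n l m θt φJ) ⬝ᵥ A.mulVec (rotCol n l m θt φJ)).re ≤
      (star (rotCol n l m θ φJ) ⬝ᵥ A.mulVec (rotCol n l m θ φJ)).re)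
    (hθJ : θJ = if |θt| ≤ π / 4 then θt
                else θt - (if 0 < θt then (1 : ℝ) else -1) * (π / 2)) :
    ((planeRot n l m θJ φJ)ᴴ * A * planeRot n l m θJ φJ) l m = 0 := by
  have hS := re_star_rotCol_dotProduct_mulVec_rotCol hA hlm.ne
  set α := ((A l l).re - (A m m).re) / 2
  have hφJ : exp (φJ * I) * A l m = ‖A l m‖ := by
    refine exp_ofReal_mul_I_mul_eq_norm_of_isMaxOn (isMaxOn_iff.mpr fun φ hφ => ?_)
    have := hφJmin φ hφ
    simp only [hS, show 2 * (π / 4) = π / 2 by ring, Real.cos_pi_div_two, Real.sin_pi_div_two]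
      at this
    linarith
  have hθt : α * Real.sin (2 * θt) + ‖A l m‖ * Real.cos (2 * θt) = 0 := by
    refine mul_sin_add_mul_cos_eq_zero_of_isMinOn (isMinOn_iff.mpr fun t ht => ?_)
    have := hθtmin (t / 2) ⟨by linarith [ht.1], by linarith [ht.2]⟩
    rw [hS, hS, hφJ, ofReal_re, mul_div_cancel₀ t two_ne_zero] at this
    linarith
  have hθJ' : α * Real.sin (2 * θJ) + ‖A l m‖ * Real.cos (2 * θJ) = 0 := by
    obtain ⟨k, hk⟩ : ∃ k : ℤ, 2 * θJ = 2 * θt + k * π := by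
      rw [hθJ]; split_ifs
      exacts [⟨0, by simp⟩, ⟨-1, by push_cast; ring⟩, ⟨1, by push_cast; ring⟩]
    rw [hk, Real.sin_add_int_mul_pi, Real.cos_add_int_mul_pi]
    linear_combination (-1 : ℝ) ^ k * hθt
  rw [planeRot_conjTranspose_mul_mul_apply hA hlm.ne, hφJ, ofReal_re, ofReal_im, hθJ']
  simp

/-- the rotation angles obtained by the two successive line searches of
Theorem 1 zero out the `(l,m)` entry of the rotated matrix. -/
theorem obnsla_two_line_searches_zero_entry
    {n : ℕ} (hn : 2 ≤ n) (A : Matrix (Fin n) (Fin n) ℂ) (hA : A.IsHermitian)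
    (l m : Fin n) (hlm : l < m)
    (φJ θt θJ : ℝ)
    (hφJmem : φJ ∈ Set.Icc (-π) π)
    (hφJmin : ∀ φ ∈ Set.Icc (-π) π,
      (star (rotCol n l m (π / 4) φJ) ⬝ᵥ A.mulVec (rotCol n l m (π / 4) φJ)).re ≤
      (star (rotCol n l m (π / 4) φ) ⬝ᵥ A.mulVec (rotCol n l m (π / 4) φ)).re)
    (hθtmem : θt ∈ Set.Icc (-(π / 2)) (π / 2))
    (hθtmin : ∀ θ ∈ Set.Icc (-(π / 2)) (π / 2),
      (star (rotCol n l m θt φJ) ⬝ᵥ A.mulVec (rotCol n l m θt φJ)).re ≤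
      (star (rotCol n l m θ φJ) ⬝ᵥ A.mulVec (rotCol n l m θ φJ)).re)
    (hθJ : θJ = if |θt| ≤ π / 4 then θt
                else θt - (if 0 < θt then (1 : ℝ) else -1) * (π / 2)) :
    ((planeRot n l m θJ φJ)ᴴ * A * planeRot n l m θJ φJ) l m = 0 :=
  obnsla_two_line_searches_zero_entry_general A hA l m hlm φJ θt θJ hφJmin hθtmin hθJ

end
end

section
/- Let A be an n×n complex Hermitian matrix and 1 ≤ l < m ≤ n. Then for all real θ and φ: r_{l,m}(θ,φ)* · A · r_{l,m}(θ,φ) = cos²(θ)·A_{l,l} + sin²(θ)·A_{m,m} − |A_{l,m}|·sin(2θ)·cos(φ + arg(A_{l,m})), where A_{l,l} and A_{m,m} are the (real) diagonal entries of A and arg denotes the complex argument. -/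
open Matrix Real Complex Finset Filter

noncomputable section

/-! Only the entries `l` and `m` of `r = cos θ · e_l − e^{iφ} sin θ · e_m` are nonzero, so
`r* A r` sees only the `2 × 2` block of `A` at `(l, m)`. For Hermitian `A` the two off-diagonal
terms are conjugate, and their sum `2 Re(cos θ · A_{lm} · (−e^{iφ} sin θ))` becomes
`−|A_{lm}| sin 2θ cos(φ + arg A_{lm})` once `A_{lm}` is written in polar form. -/

theorem star_dotProduct_mulVec_single_add_single {ι R : Type*} [Fintype ι] [DecidableEq ι]
    [NonUnitalSemiring R] [StarRing R] (A : Matrix ι ι R) (i j : ι) (a b : R) :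
    star (Pi.single i a + Pi.single j b) ⬝ᵥ A *ᵥ (Pi.single i a + Pi.single j b) =
      star a * (A i i * a) + star a * (A i j * b) + star b * (A j i * a) +
        star b * (A j j * b) := by
  simp only [star_add, ← Pi.single_star, add_dotProduct, single_dotProduct, mulVec_add,
    Pi.add_apply, mulVec, dotProduct_single, mul_add, add_assoc]

theorem Matrix.IsHermitian.star_dotProduct_mulVec_single_add_single {ι : Type*} [Fintype ι]
    [DecidableEq ι] {A : Matrix ι ι ℂ} (hA : A.IsHermitian) (i j : ι) (a b : ℂ) :
    star (Pi.single i a + Pi.single j b) ⬝ᵥ A *ᵥ (Pi.single i a + Pi.single j b) =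
      ((‖a‖ ^ 2 * (A i i).re + ‖b‖ ^ 2 * (A j j).re + 2 * (star a * A i j * b).re : ℝ) : ℂ) := by
  have real_diag (k : ι) : ((A k k).re : ℂ) = A k k := Complex.conj_eq_iff_re.mp (hA.apply k k)
  have norm_sq (z : ℂ) : star z * z = ((‖z‖ ^ 2 : ℝ) : ℂ) := by
    rw [Complex.star_def, ← Complex.normSq_eq_conj_mul_self, Complex.normSq_eq_norm_sq]
  have cross : star b * (A j i * a) = starRingEnd ℂ (star a * A i j * b) := by
    rw [← hA.apply j i]
    simp only [← Complex.star_def, star_mul', star_star]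
    ring
  rw [_root_.star_dotProduct_mulVec_single_add_single, cross]
  conv_lhs => rw [← real_diag i, ← real_diag j]
  calc _ = star a * a * ((A i i).re : ℂ) + star b * b * ((A j j).re : ℂ)
        + (star a * A i j * b + starRingEnd ℂ (star a * A i j * b)) := by ring
    _ = _ := by rw [norm_sq, norm_sq, Complex.add_conj]; push_cast; ring

theorem Complex.re_mul_exp_mul_I (z : ℂ) (φ : ℝ) :
    (z * exp (φ * I)).re = ‖z‖ * Real.cos (φ + arg z) := by
  conv_lhs => rw [← norm_mul_exp_arg_mul_I z]
  rw [mul_assoc, ← exp_add, ← add_mul, ← ofReal_add, re_ofReal_mul, exp_ofReal_mul_I_re, add_comm]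

theorem rotCol_eq_single_add_single {n : ℕ} {l m : Fin n} (hlm : l ≠ m) (θ φ : ℝ) :
    rotCol n l m θ φ =
      Pi.single l (Real.cos θ : ℂ) +
        Pi.single m (-(Complex.exp (φ * Complex.I) * Real.sin θ)) := by
  ext i
  by_cases hil : i = l
  · subst hil; simp [rotCol, planeRot, hlm]
  by_cases him : i = m
  · subst him; simp [rotCol, planeRot, hlm, hlm.symm]
  · simp [rotCol, planeRot, hil, him]

theorem quadratic_form_along_rotation_column_general
    {n : ℕ} (A : Matrix (Fin n) (Fin n) ℂ) (hA : A.IsHermitian)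
    (l m : Fin n) (hlm : l < m) (θ φ : ℝ) :
    star (rotCol n l m θ φ) ⬝ᵥ A.mulVec (rotCol n l m θ φ) =
      ((Real.cos θ ^ 2 * (A l l).re + Real.sin θ ^ 2 * (A m m).re -
        ‖A l m‖ * Real.sin (2 * θ) *
          Real.cos (φ + Complex.arg (A l m)) : ℝ) : ℂ) := by
  rw [rotCol_eq_single_add_single hlm.ne, hA.star_dotProduct_mulVec_single_add_single]
  have norm_cos : ‖(Real.cos θ : ℂ)‖ ^ 2 = Real.cos θ ^ 2 := by
    rw [Complex.norm_real, Real.norm_eq_abs, sq_abs]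
  have norm_sin : ‖-(Complex.exp (φ * Complex.I) * Real.sin θ)‖ ^ 2 = Real.sin θ ^ 2 := by
    rw [norm_neg, norm_mul, Complex.norm_exp_ofReal_mul_I, one_mul, Complex.norm_real,
      Real.norm_eq_abs, sq_abs]
  have cross : (star (Real.cos θ : ℂ) * A l m * -(Complex.exp (φ * Complex.I) * Real.sin θ)).re
      = -(Real.cos θ * Real.sin θ) * (‖A l m‖ * Real.cos (φ + Complex.arg (A l m))) := by
    rw [← Complex.re_mul_exp_mul_I, ← Complex.re_ofReal_mul, Complex.star_def, Complex.conj_ofReal]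
    congr 1
    push_cast
    ring
  rw [norm_cos, norm_sin, cross, Real.sin_two_mul]
  push_cast
  ring

/-- the quadratic form of a Hermitian matrix along `r_{l,m}(θ,φ)` is the
sinusoid `cos²θ·A_{l,l} + sin²θ·A_{m,m} − |A_{l,m}|·sin(2θ)·cos(φ + arg A_{l,m})`. -/
theorem quadratic_form_along_rotation_column
    {n : ℕ} (hn : 2 ≤ n) (A : Matrix (Fin n) (Fin n) ℂ) (hA : A.IsHermitian)
    (l m : Fin n) (hlm : l < m) (θ φ : ℝ) :
    star (rotCol n l m θ φ) ⬝ᵥ A.mulVec (rotCol n l m θ φ) =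
      ((Real.cos θ ^ 2 * (A l l).re + Real.sin θ ^ 2 * (A m m).re -
        ‖A l m‖ * Real.sin (2 * θ) *
          Real.cos (φ + Complex.arg (A l m)) : ℝ) : ℂ) :=
  quadratic_form_along_rotation_column_general A hA l m hlm θ φ

end
end

section
/- Let w : ℝ → ℝ be given by w(φ) = B − A·cos(φ − ψ), where A > 0, B ∈ ℝ, and ψ ∈ [−π,π] (so ψ is a global minimum point of w on [−π,π]). Then: (a) if w(−π) ≥ w(−π/2) and w(0) ≥ w(−π/2), then ψ ∈ [−3π/4, −π/4]; (b) if w(−π) ≥ w(−π/2) ≥ w(0), then ψ ∈ [−π/4, π/4]; (c) if w(−π) ≤ w(−π/2) and w(0) ≤ w(−π/2), then ψ ∈ [π/4, 3π/4]; (d) if w(−π) ≤ w(−π/2) ≤ w(0), then ψ ∈ [3π/4, π] ∪ [−π, −3π/4]. -/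
open Real Set

/-!
Samples of `w` a quarter period apart differ by `√2 · A · cos (ψ - φ - π/4)`, so the comparison
of `w (-π)` with `w (-π/2)` reads off the sign of `cos (ψ + π/4)`, and that of `w (-π/2)` with
`w 0` the sign of `cos (ψ - π/4)`. For `ψ ∈ [-π, π]` each sign puts `ψ ± π/4` inside or outside
`[-π/2, π/2]`, and the two answers together confine `ψ` to a quarter period.
-/

lemma cos_sub_sin_eq_sqrt_two_mul_cos (x : ℝ) : cos x - sin x = √2 * cos (x + π / 4) := by
  rw [cos_add, cos_pi_div_four, sin_pi_div_four]
  ring_nf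
  rw [sq_sqrt zero_le_two]
  ring

lemma abs_le_pi_div_two_of_cos_nonneg {y : ℝ} (hy : |y| < 3 * π / 2) (h : 0 ≤ cos y) :
    |y| ≤ π / 2 := by
  by_contra! hlt
  rw [← cos_abs] at h
  exact (cos_neg_of_pi_div_two_lt_of_lt hlt (by linarith)).not_ge h

lemma pi_div_two_le_abs_of_cos_nonpos {y : ℝ} (h : cos y ≤ 0) : π / 2 ≤ |y| := by
  by_contra! hlt
  exact (cos_pos_of_mem_Ioo (abs_lt.1 hlt)).not_ge h

section Sinusoid

variable {A B ψ : ℝ} {w : ℝ → ℝ}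

lemma sinusoid_sub_pi_div_two_sub (hw : ∀ φ, w φ = B - A * cos (φ - ψ)) (φ : ℝ) :
    w (φ - π / 2) - w φ = √2 * A * cos (ψ - φ - π / 4) := by
  rw [hw, hw, show φ - π / 2 - ψ = φ - ψ - π / 2 by ring, cos_sub_pi_div_two,
    show ψ - φ - π / 4 = -(φ - ψ + π / 4) by ring, cos_neg]
  linear_combination A * cos_sub_sin_eq_sqrt_two_mul_cos (φ - ψ)

lemma le_sinusoid_sub_pi_div_two_iff (hA : 0 < A) (hw : ∀ φ, w φ = B - A * cos (φ - ψ)) (φ : ℝ) :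
    w φ ≤ w (φ - π / 2) ↔ 0 ≤ cos (ψ - φ - π / 4) := by
  rw [← sub_nonneg, sinusoid_sub_pi_div_two_sub hw, mul_nonneg_iff_of_pos_left (by positivity)]

lemma sinusoid_sub_pi_div_two_le_iff (hA : 0 < A) (hw : ∀ φ, w φ = B - A * cos (φ - ψ)) (φ : ℝ) :
    w (φ - π / 2) ≤ w φ ↔ cos (ψ - φ - π / 4) ≤ 0 := by
  rw [← sub_nonpos, ← neg_nonneg, sinusoid_sub_pi_div_two_sub hw, ← mul_neg,
    mul_nonneg_iff_of_pos_left (by positivity), neg_nonneg]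

end Sinusoid

/-- Proposition 1 of the paper: locating a `π/2`-length interval containing
the minimizer `ψ` of the sinusoid `w(φ) = B − A·cos(φ − ψ)` from three one-bit
comparisons of `w` at `−π`, `−π/2`, `0`. -/
theorem single_minimum_interval_determination
    (A B ψ : ℝ) (hA : 0 < A) (hψ : ψ ∈ Set.Icc (-π) π)
    (w : ℝ → ℝ) (hw : ∀ φ, w φ = B - A * Real.cos (φ - ψ)) :
    (w (-π) ≥ w (-(π / 2)) ∧ w 0 ≥ w (-(π / 2)) →
        ψ ∈ Set.Icc (-(3 * π / 4)) (-(π / 4))) ∧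
    (w (-π) ≥ w (-(π / 2)) ∧ w (-(π / 2)) ≥ w 0 →
        ψ ∈ Set.Icc (-(π / 4)) (π / 4)) ∧
    (w (-π) ≤ w (-(π / 2)) ∧ w 0 ≤ w (-(π / 2)) →
        ψ ∈ Set.Icc (π / 4) (3 * π / 4)) ∧
    (w (-π) ≤ w (-(π / 2)) ∧ w (-(π / 2)) ≤ w 0 →
        ψ ∈ Set.Icc (3 * π / 4) π ∪ Set.Icc (-π) (-(3 * π / 4))) := by
  obtain ⟨hψl, hψr⟩ := hψ
  have hπ := pi_pos
  have hplus_nonneg := le_sinusoid_sub_pi_div_two_iff hA hw (-(π / 2))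
  have hplus_nonpos := sinusoid_sub_pi_div_two_le_iff hA hw (-(π / 2))
  have hminus_nonneg := le_sinusoid_sub_pi_div_two_iff hA hw 0
  have hminus_nonpos := sinusoid_sub_pi_div_two_le_iff hA hw 0
  rw [show -(π / 2) - π / 2 = -π by ring, show ψ - -(π / 2) - π / 4 = ψ + π / 4 by ring]
    at hplus_nonneg hplus_nonpos
  rw [zero_sub, sub_zero] at hminus_nonneg hminus_nonpos
  have hplus_lt : |ψ + π / 4| < 3 * π / 2 := abs_lt.2 ⟨by linarith, by linarith⟩
  have hminus_lt : |ψ - π / 4| < 3 * π / 2 := abs_lt.2 ⟨by linarith, by linarith⟩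
  refine ⟨fun ⟨h₁, h₂⟩ => ?_, fun ⟨h₁, h₂⟩ => ?_, fun ⟨h₁, h₂⟩ => ?_, fun ⟨h₁, h₂⟩ => ?_⟩
  · obtain ⟨h₃, h₃'⟩ := abs_le.1 (abs_le_pi_div_two_of_cos_nonneg hplus_lt (hplus_nonneg.1 h₁))
    rcases le_abs'.1 (pi_div_two_le_abs_of_cos_nonpos (hminus_nonpos.1 h₂)) with h₄ | h₄ <;>
      constructor <;> linarith
  · obtain ⟨h₃, h₃'⟩ := abs_le.1 (abs_le_pi_div_two_of_cos_nonneg hplus_lt (hplus_nonneg.1 h₁))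
    obtain ⟨h₄, h₄'⟩ := abs_le.1 (abs_le_pi_div_two_of_cos_nonneg hminus_lt (hminus_nonneg.1 h₂))
    constructor <;> linarith
  · obtain ⟨h₃, h₃'⟩ := abs_le.1 (abs_le_pi_div_two_of_cos_nonneg hminus_lt (hminus_nonneg.1 h₂))
    rcases le_abs'.1 (pi_div_two_le_abs_of_cos_nonpos (hplus_nonpos.1 h₁)) with h₄ | h₄ <;>
      constructor <;> linarith
  · rcases le_abs'.1 (pi_div_two_le_abs_of_cos_nonpos (hplus_nonpos.1 h₁)) with h₃ | h₃
    · exact Or.inr ⟨hψl, by linarith⟩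
    · rcases le_abs'.1 (pi_div_two_le_abs_of_cos_nonpos (hminus_nonpos.1 h₂)) with h₄ | h₄
      · linarith
      · exact Or.inl ⟨by linarith, hψr⟩
end

section
/- Let H be an n_r×n_t complex matrix with n_r < n_t and rank(H) = n_r, let G = H*H, let W be an n_t×n_t unitary matrix, let A = W*GW, and let P = P(A). Let i_1, …, i_{n_t} be an ordering of the indices {1,…,n_t} such that the diagonal entries satisfy A_{i_1,i_1} ≤ A_{i_2,i_2} ≤ … ≤ A_{i_{n_t},i_{n_t}}. Then for every q with 1 ≤ q ≤ n_t − n_r, the interference power of the q-th best precoding column satisfies ‖H·(W e_{i_q})‖² ≤ √2·P, where ‖·‖ is the Euclidean norm and e_i is the i-th standard basis vector. -/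
open Matrix Real Complex Finset Filter

noncomputable section

/-!
Write `M = H W`, so that `A = Mᴴ M` and `‖H W eᵢ‖² = Aᵢᵢ`. The `n_r + 1` columns of `M` ranked
`q, …, q + n_r` live in `ℂ^{n_r}`, so some `v ≠ 0` is annihilated by them, and then `v* A_S v = 0`
for the corresponding principal submatrix `A_S`, whose diagonal entries are all at least
`A_{i_q i_q}`. Splitting `v* A_S v` into its diagonal and off-diagonal parts and applying
Cauchy–Schwarz to the latter gives `A_{i_q i_q} ‖v‖² ≤ ‖off(A_S)‖_F ‖v‖² ≤ √2 P(A) ‖v‖²`.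
-/

open Function

section OffDiagonal

variable {ι : Type*} [Fintype ι]

def offDiagNormSq (B : Matrix ι ι ℂ) : ℝ :=
  ∑ p ∈ univ.offDiag, ‖B p.1 p.2‖ ^ 2

theorem star_dotProduct_mulVec_eq_sum_diag_add_sum_offDiag [DecidableEq ι] (B : Matrix ι ι ℂ)
    (v : ι → ℂ) :
    star v ⬝ᵥ B *ᵥ v = ∑ i, star (v i) * B i i * v i
      + ∑ p ∈ univ.offDiag, star (v p.1) * B p.1 p.2 * v p.2 := by
  have hsum : star v ⬝ᵥ B *ᵥ v = ∑ p ∈ univ ×ˢ univ, star (v p.1) * B p.1 p.2 * v p.2 := by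
    simp only [dotProduct, mulVec, mul_sum, Pi.star_apply, mul_assoc]
    exact (sum_product' _ _ _).symm
  rw [hsum, ← diag_union_offDiag, sum_union (disjoint_diag_offDiag _), sum_diag]

theorem norm_sum_offDiag_le (B : Matrix ι ι ℂ) (v : ι → ℂ) :
    ‖∑ p ∈ univ.offDiag, star (v p.1) * B p.1 p.2 * v p.2‖
      ≤ √(offDiagNormSq B) * ∑ i, ‖v i‖ ^ 2 := by
  have hv : ∑ p ∈ univ.offDiag, (‖v p.1‖ * ‖v p.2‖) ^ 2 ≤ (∑ i, ‖v i‖ ^ 2) ^ 2 := calc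
    _ ≤ ∑ p ∈ univ ×ˢ univ, (‖v p.1‖ * ‖v p.2‖) ^ 2 :=
      sum_le_sum_of_subset_of_nonneg (fun _ _ => mem_product.2 ⟨mem_univ _, mem_univ _⟩)
        fun _ _ _ => by positivity
    _ = (∑ i, ‖v i‖ ^ 2) ^ 2 := by
      rw [sq (∑ i, _), sum_mul_sum, sum_product]; simp only [mul_pow]
  calc _ ≤ ∑ p ∈ univ.offDiag, ‖B p.1 p.2‖ * (‖v p.1‖ * ‖v p.2‖) := by
        refine (norm_sum_le _ _).trans (sum_le_sum fun p _ => ?_)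
        rw [norm_mul, norm_mul, norm_star]; linarith
    _ ≤ √(offDiagNormSq B) * √(∑ p ∈ univ.offDiag, (‖v p.1‖ * ‖v p.2‖) ^ 2) :=
        Real.sum_mul_le_sqrt_mul_sqrt _ _ _
    _ ≤ √(offDiagNormSq B) * ∑ i, ‖v i‖ ^ 2 := by
        gcongr
        exact Real.sqrt_le_left (by positivity) |>.mpr hv

theorem le_sqrt_offDiagNormSq_of_star_dotProduct_mulVec_eq_zero [DecidableEq ι]
    {B : Matrix ι ι ℂ} {v : ι → ℂ} (hv : v ≠ 0) (hBv : star v ⬝ᵥ B *ᵥ v = 0) {c : ℝ}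
    (hc : ∀ i, c ≤ (B i i).re) : c ≤ √(offDiagNormSq B) := by
  set V := ∑ i, ‖v i‖ ^ 2
  have hV : 0 < V := by
    obtain ⟨i, hi⟩ := ne_iff.mp hv
    exact sum_pos' (fun _ _ => by positivity) ⟨i, mem_univ i, pow_pos (norm_pos_iff.2 hi) 2⟩
  have hdiag_re : ∀ i, (star (v i) * B i i * v i).re = (B i i).re * ‖v i‖ ^ 2 := fun i => by
    rw [mul_right_comm, Complex.star_def, Complex.conj_mul', ← Complex.ofReal_pow,
      Complex.re_ofReal_mul, mul_comm]
  have key := congrArg Complex.re (star_dotProduct_mulVec_eq_sum_diag_add_sum_offDiag B v)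
  rw [hBv, Complex.zero_re, Complex.add_re, Complex.re_sum] at key
  simp only [hdiag_re] at key
  refine le_of_mul_le_mul_right ?_ hV
  calc c * V ≤ ∑ i, (B i i).re * ‖v i‖ ^ 2 := by
        rw [mul_sum]; exact sum_le_sum fun i _ => by gcongr; exact hc i
    _ = -(∑ p ∈ univ.offDiag, star (v p.1) * B p.1 p.2 * v p.2).re := by linarith
    _ ≤ ‖∑ p ∈ univ.offDiag, star (v p.1) * B p.1 p.2 * v p.2‖ :=
        (neg_le_abs _).trans (Complex.abs_re_le_norm _)
    _ ≤ √(offDiagNormSq B) * V := norm_sum_offDiag_le B v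

theorem offDiagNormSq_submatrix_le {κ : Type*} [Fintype κ] (B : Matrix ι ι ℂ) {f : κ → ι}
    (hf : Injective f) : offDiagNormSq (B.submatrix f f) ≤ offDiagNormSq B := by
  classical
  have hmap : univ.offDiag.map (Embedding.prodMap ⟨f, hf⟩ ⟨f, hf⟩) ⊆ univ.offDiag := by
    intro p hp
    obtain ⟨a, ha, rfl⟩ := mem_map.mp hp
    simp only [mem_offDiag] at ha ⊢
    exact ⟨mem_univ _, mem_univ _, hf.ne ha.2.2⟩
  calc offDiagNormSq (B.submatrix f f)
      = ∑ p ∈ univ.offDiag.map (Embedding.prodMap ⟨f, hf⟩ ⟨f, hf⟩), ‖B p.1 p.2‖ ^ 2 := by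
        rw [sum_map]; rfl
    _ ≤ offDiagNormSq B := sum_le_sum_of_subset_of_nonneg hmap fun _ _ _ => by positivity

end OffDiagonal

theorem exists_ne_zero_mulVec_eq_zero_of_card_lt {K κ ι : Type*} [Field K] [Fintype κ]
    [Fintype ι] (N : Matrix κ ι K) (h : Fintype.card κ < Fintype.card ι) :
    ∃ v ≠ 0, N *ᵥ v = 0 := by
  obtain ⟨v, hv, hv0⟩ := Submodule.exists_mem_ne_zero_of_ne_bot
    (LinearMap.ker_ne_bot_of_finrank_lt (f := N.mulVecLin) (by simpa using h))
  exact ⟨v, hv0, hv⟩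

theorem re_conjTranspose_mul_self_apply_self {κ ι : Type*} [Fintype κ] (M : Matrix κ ι ℂ)
    (i : ι) : ((Mᴴ * M) i i).re = ∑ k, ‖M k i‖ ^ 2 := by
  simp only [mul_apply, conjTranspose_apply, Complex.re_sum, Complex.star_def,
    ← Complex.normSq_eq_norm_sq, mul_comm (starRingEnd ℂ _), Complex.mul_conj, Complex.ofReal_re]

theorem le_sqrt_offDiagNormSq_conjTranspose_mul_self {κ ι n : Type*} [Fintype κ] [Fintype ι]
    [DecidableEq ι] [Fintype n] (M : Matrix κ n ℂ) {f : ι → n} (hf : Injective f)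
    (hcard : Fintype.card κ < Fintype.card ι) {c : ℝ}
    (hc : ∀ i, c ≤ ((Mᴴ * M) (f i) (f i)).re) : c ≤ √(offDiagNormSq (Mᴴ * M)) := by
  set N := M.submatrix id f
  have hsub : (Mᴴ * M).submatrix f f = Nᴴ * N := by
    rw [submatrix_mul _ _ f id f bijective_id, conjTranspose_submatrix]
  obtain ⟨v, hv, hNv⟩ := exists_ne_zero_mulVec_eq_zero_of_card_lt N hcard
  have hquad : star v ⬝ᵥ (Mᴴ * M).submatrix f f *ᵥ v = 0 := by
    rw [hsub, ← mulVec_mulVec, hNv, mulVec_zero, dotProduct_zero]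
  exact (le_sqrt_offDiagNormSq_of_star_dotProduct_mulVec_eq_zero hv hquad hc).trans
    (Real.sqrt_le_sqrt (offDiagNormSq_submatrix_le _ hf))

theorem offP_nonneg {n : ℕ} (A : Matrix (Fin n) (Fin n) ℂ) : 0 ≤ offP A :=
  Real.sqrt_nonneg _

theorem offDiagNormSq_eq_two_mul_offP_sq {n : ℕ} {A : Matrix (Fin n) (Fin n) ℂ}
    (hA : A.IsHermitian) : offDiagNormSq A = 2 * offP A ^ 2 := by
  set U := ∑ l, ∑ m, if l < m then ‖A l m‖ ^ 2 else 0
  have hnorm : ∀ l m, ‖A m l‖ = ‖A l m‖ := fun l m => by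
    rw [← hA.apply l m, norm_star]
  have hsplit : ∀ l m, (if l ≠ m then ‖A l m‖ ^ 2 else 0)
      = (if l < m then ‖A l m‖ ^ 2 else 0) + (if m < l then ‖A m l‖ ^ 2 else 0) := by
    intro l m
    rcases lt_trichotomy l m with h | rfl | h
    · simp [h, h.ne, h.not_gt]
    · simp
    · simp [h, h.ne', h.not_gt, hnorm]
  have hlower : ∑ l, ∑ m, (if m < l then ‖A m l‖ ^ 2 else 0) = U := sum_comm
  have hoffDiag : univ.offDiag = (univ ×ˢ univ).filter fun p : Fin n × Fin n => p.1 ≠ p.2 := by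
    ext p; simp
  rw [offP, Real.sq_sqrt (sum_nonneg fun _ _ => sum_nonneg fun _ _ => by positivity),
    offDiagNormSq, hoffDiag, sum_filter, sum_product]
  simp only [hsplit, sum_add_distrib, hlower]
  ring

theorem interference_of_best_precoding_columns_general
    (nr nt : ℕ)
    (H : Matrix (Fin nr) (Fin nt) ℂ)
    (W : Matrix (Fin nt) (Fin nt) ℂ)
    (A : Matrix (Fin nt) (Fin nt) ℂ) (hA : A = Wᴴ * (Hᴴ * H) * W)
    (e : Equiv.Perm (Fin nt))
    (hord : ∀ p q : Fin nt, p ≤ q → (A (e p) (e p)).re ≤ (A (e q) (e q)).re) :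
    ∀ q : Fin nt, (q : ℕ) < nt - nr →
      ∑ i, ‖(H.mulVec fun j => W j (e q)) i‖ ^ 2 ≤
        Real.sqrt 2 * offP A := by
  intro q hq
  have hAM : A = (H * W)ᴴ * (H * W) := by
    rw [hA, conjTranspose_mul, Matrix.mul_assoc, Matrix.mul_assoc, Matrix.mul_assoc]
  let f : Fin (nr + 1) → Fin nt := fun p => e ⟨q + p, by omega⟩
  have hf : Injective f := fun a b hab => Fin.ext (by simpa using e.injective hab)
  have hdiag : ∀ p, (A (e q) (e q)).re ≤ (A (f p) (f p)).re := fun p =>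
    hord _ _ (by simp [Fin.le_def])
  have hherm : A.IsHermitian := hAM ▸ isHermitian_conjTranspose_mul_self _
  calc ∑ i, ‖(H.mulVec fun j => W j (e q)) i‖ ^ 2 = (A (e q) (e q)).re := by
        rw [hAM, re_conjTranspose_mul_self_apply_self]; rfl
    _ ≤ √(offDiagNormSq A) := by
        rw [hAM] at hdiag ⊢
        exact le_sqrt_offDiagNormSq_conjTranspose_mul_self _ hf (by simp) hdiag
    _ = √2 * offP A := by
        rw [offDiagNormSq_eq_two_mul_offP_sq hherm, Real.sqrt_mul zero_le_two,
          Real.sqrt_sq (offP_nonneg A)]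

/-- Proposition 2 of the paper: the interference power of each of the
`n_t − n_r` best precoding columns is at most `√2·P(A)`. -/
theorem interference_of_best_precoding_columns
    (nr nt : ℕ) (hrt : nr < nt)
    (H : Matrix (Fin nr) (Fin nt) ℂ) (hrank : H.rank = nr)
    (W : Matrix (Fin nt) (Fin nt) ℂ) (hW : W ∈ Matrix.unitaryGroup (Fin nt) ℂ)
    (A : Matrix (Fin nt) (Fin nt) ℂ) (hA : A = Wᴴ * (Hᴴ * H) * W)
    (e : Equiv.Perm (Fin nt))
    (hord : ∀ p q : Fin nt, p ≤ q → (A (e p) (e p)).re ≤ (A (e q) (e q)).re) :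
    ∀ q : Fin nt, (q : ℕ) < nt - nr →
      ∑ i, ‖(H.mulVec fun j => W j (e q)) i‖ ^ 2 ≤
        Real.sqrt 2 * offP A :=
  interference_of_best_precoding_columns_general nr nt H W A hA e hord

end
end

section
/- Let A be an n×n complex Hermitian matrix whose eigenvalues (with multiplicity) satisfy λ_{r+1} = λ_{r+2} = … = λ_n = λ, while λ_1, …, λ_r are pairwise distinct and all different from λ. Partition A = [[A₁, B],[B*, A₂]] with A₁ of size r×r and A₂ of size (n−r)×(n−r). Let δ' > 0 and suppose that A₁ − λI is invertible with ‖(A₁ − λI)^{−1}‖_op < 1/δ', where ‖·‖_op is the operator (spectral) norm. Then ‖A₂ − λI‖_op ≤ ‖B‖_op²/δ'. -/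
open Matrix

noncomputable section

/-- The `ℓ²`-operator (spectral) norm of a rectangular complex matrix. -/
def opNorm {m n : Type*} [Fintype m] [Fintype n] [DecidableEq n]
    (A : Matrix m n ℂ) : ℝ :=
  ‖LinearMap.toContinuousLinearMap (Matrix.toEuclideanLin A)‖

/-!
The last `s` columns of the diagonalizing unitary are orthonormal eigenvectors for `λ`, so
`A - λ` has a kernel of dimension `s`. As its leading block `A₁ - λ` is invertible, this forces the
Schur complement to vanish, `A₂ - λ = B* (A₁ - λ)⁻¹ B`, and the estimate follows from
submultiplicativity of the operator norm.
-/

namespace Matrix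

section BlockKernel

variable {m n K : Type*} [Fintype m] [Fintype n] [DecidableEq m] [DecidableEq n] [Field K]
  {P : Matrix m m K} {Q : Matrix m n K} {R : Matrix n m K} {S : Matrix n n K}
  {V : Matrix (m ⊕ n) n K}

omit [DecidableEq m] [DecidableEq n] in
theorem fromBlocks_mul_eq_zero_iff :
    fromBlocks P Q R S * V = 0 ↔
      P * V.toRows₁ + Q * V.toRows₂ = 0 ∧ R * V.toRows₁ + S * V.toRows₂ = 0 := by
  rw [← fromRows_toRows V, fromBlocks_mul_fromRows, ← fromRows_zero, fromRows_inj.eq_iff,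
    toRows₁_fromRows, toRows₂_fromRows]

omit [DecidableEq n] in
theorem toRows₁_eq_of_fromBlocks_mul_eq_zero (hP : IsUnit P) (h : fromBlocks P Q R S * V = 0) :
    V.toRows₁ = -(P⁻¹ * Q * V.toRows₂) := by
  have hPV : P * V.toRows₁ = -(Q * V.toRows₂) :=
    eq_neg_of_add_eq_zero_left (fromBlocks_mul_eq_zero_iff.mp h).1
  rw [← nonsing_inv_mul_cancel_left P V.toRows₁ ((isUnit_iff_isUnit_det P).mp hP), hPV,
    Matrix.mul_neg, Matrix.mul_assoc]

omit [DecidableEq n] in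
theorem schur_mul_toRows₂_eq_zero (hP : IsUnit P) (h : fromBlocks P Q R S * V = 0) :
    (S - R * P⁻¹ * Q) * V.toRows₂ = 0 := by
  have h₂ := (fromBlocks_mul_eq_zero_iff.mp h).2
  rw [toRows₁_eq_of_fromBlocks_mul_eq_zero hP h] at h₂
  rw [← h₂, Matrix.sub_mul, Matrix.mul_neg]
  simp only [Matrix.mul_assoc]
  abel

theorem isUnit_toRows₂_of_fromBlocks_mul_eq_zero (hP : IsUnit P)
    (hV : Function.Injective V.mulVec) (h : fromBlocks P Q R S * V = 0) : IsUnit V.toRows₂ := by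
  refine mulVec_injective_iff_isUnit.mp fun x y hxy => hV ?_
  -- the top rows are determined by the bottom rows
  rw [← fromRows_toRows V, fromRows_mulVec, fromRows_mulVec,
    toRows₁_eq_of_fromBlocks_mul_eq_zero hP h]
  simp only [neg_mulVec, ← mulVec_mulVec, hxy]

theorem eq_mul_inv_mul_of_fromBlocks_mul_eq_zero (hP : IsUnit P)
    (hV : Function.Injective V.mulVec) (h : fromBlocks P Q R S * V = 0) :
    S = R * P⁻¹ * Q := by
  have hV₂ := (isUnit_toRows₂_of_fromBlocks_mul_eq_zero hP hV h).mul_left_injective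
  exact sub_eq_zero.mp (hV₂ ((schur_mul_toRows₂_eq_zero hP h).trans (Matrix.zero_mul _).symm))

end BlockKernel

theorem sub_smul_one_eq_fromBlocks {m n α : Type*} [DecidableEq m] [DecidableEq n] [Ring α]
    (A : Matrix (m ⊕ n) (m ⊕ n) α) (c : α) :
    A - c • 1 =
      fromBlocks (A.toBlocks₁₁ - c • 1) A.toBlocks₁₂ A.toBlocks₂₁ (A.toBlocks₂₂ - c • 1) := by
  ext (i | i) (j | j) <;> simp [one_apply, toBlocks₁₁, toBlocks₁₂, toBlocks₂₁, toBlocks₂₂]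

theorem IsHermitian.toBlocks₂₁_eq_conjTranspose {m n α : Type*} [InvolutiveStar α]
    {A : Matrix (m ⊕ n) (m ⊕ n) α} (hA : A.IsHermitian) : A.toBlocks₂₁ = A.toBlocks₁₂ᴴ := by
  rw [← fromBlocks_toBlocks A, isHermitian_fromBlocks_iff] at hA
  exact hA.2.1.symm

section Unitary

variable {ι κ 𝕜 : Type*} [Fintype ι] [DecidableEq ι] [RCLike 𝕜]
  {U : Matrix ι ι 𝕜} (hU : U ∈ unitaryGroup ι 𝕜)
include hU

theorem conjTranspose_mul_self_submatrix_col [DecidableEq κ] {f : κ → ι}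
    (hf : Function.Injective f) :
    (U.submatrix id f)ᴴ * U.submatrix id f = 1 := by
  rw [conjTranspose_submatrix, ← submatrix_mul _ _ f id f Function.bijective_id,
    ← star_eq_conjTranspose, Unitary.star_mul_self_of_mem hU, submatrix_one f hf]

theorem mulVec_injective_submatrix_col [Fintype κ] {f : κ → ι} (hf : Function.Injective f) :
    Function.Injective (U.submatrix id f).mulVec := by
  classical
  intro x y hxy
  have h := congrArg ((U.submatrix id f)ᴴ *ᵥ ·) hxy
  simpa only [mulVec_mulVec, conjTranspose_mul_self_submatrix_col hU hf, one_mulVec] using h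

theorem unitary_conj_diagonal_sub_smul_mul_submatrix_col_eq_zero {d : ι → 𝕜} {c : 𝕜}
    {f : κ → ι} (hd : ∀ k, d (f k) = c) :
    (U * diagonal d * Uᴴ - c • 1) * U.submatrix id f = 0 := by
  have hAU : (U * diagonal d * Uᴴ - c • 1) * U = U * diagonal (d - fun _ => c) := by
    rw [Matrix.sub_mul, Matrix.mul_assoc _ Uᴴ, ← star_eq_conjTranspose,
      Unitary.star_mul_self_of_mem hU, Matrix.mul_one, Matrix.smul_mul, Matrix.one_mul]
    ext i j
    simp [mul_diagonal, mul_sub, mul_comm]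
  calc (U * diagonal d * Uᴴ - c • 1) * U.submatrix id f
      = ((U * diagonal d * Uᴴ - c • 1) * U).submatrix id f := by
        rw [submatrix_mul _ _ id id f Function.bijective_id, submatrix_id_id]
    _ = 0 := by
        rw [hAU]
        ext i k
        simp [hd]

end Unitary

open scoped Matrix.Norms.L2Operator in
theorem l2_opNorm_conjTranspose_mul_mul_self_le {m n 𝕜 : Type*} [Fintype m] [Fintype n]
    [DecidableEq m] [DecidableEq n] [RCLike 𝕜] (B : Matrix m n 𝕜) (C : Matrix m m 𝕜) :
    ‖Bᴴ * C * B‖ ≤ ‖C‖ * ‖B‖ ^ 2 :=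
  calc ‖Bᴴ * C * B‖ ≤ ‖Bᴴ‖ * ‖C‖ * ‖B‖ :=
        (l2_opNorm_mul _ _).trans (by gcongr; exact l2_opNorm_mul _ _)
    _ = ‖C‖ * ‖B‖ ^ 2 := by rw [l2_opNorm_conjTranspose]; ring

end Matrix

theorem parlett_block_estimate_general
    {r s : ℕ} (A : Matrix (Fin r ⊕ Fin s) (Fin r ⊕ Fin s) ℂ) (hA : A.IsHermitian)
    (lam : Fin r ⊕ Fin s → ℝ) (lam0 : ℝ)
    (hspec : ∃ U ∈ Matrix.unitaryGroup (Fin r ⊕ Fin s) ℂ,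
      A = U * Matrix.diagonal (fun i => (lam i : ℂ)) * Uᴴ)
    (htail : ∀ j : Fin s, lam (Sum.inr j) = lam0)
    (δ' : ℝ)
    (hunit : IsUnit (A.toBlocks₁₁ - (lam0 : ℂ) • 1))
    (hnorm : opNorm (A.toBlocks₁₁ - (lam0 : ℂ) • 1)⁻¹ < 1 / δ') :
    opNorm (A.toBlocks₂₂ - (lam0 : ℂ) • 1) ≤ opNorm A.toBlocks₁₂ ^ 2 / δ' := by
  obtain ⟨U, hU, hAU⟩ := hspec
  have hker : fromBlocks (A.toBlocks₁₁ - (lam0 : ℂ) • 1) A.toBlocks₁₂ A.toBlocks₂₁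
      (A.toBlocks₂₂ - (lam0 : ℂ) • 1) * U.submatrix id Sum.inr = 0 := by
    rw [← sub_smul_one_eq_fromBlocks, hAU]
    exact unitary_conj_diagonal_sub_smul_mul_submatrix_col_eq_zero hU
      fun j => congrArg _ (htail j)
  rw [eq_mul_inv_mul_of_fromBlocks_mul_eq_zero hunit
      (mulVec_injective_submatrix_col hU Sum.inr_injective) hker,
    hA.toBlocks₂₁_eq_conjTranspose]
  calc opNorm (A.toBlocks₁₂ᴴ * (A.toBlocks₁₁ - (lam0 : ℂ) • 1)⁻¹ * A.toBlocks₁₂)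
      ≤ opNorm (A.toBlocks₁₁ - (lam0 : ℂ) • 1)⁻¹ * opNorm A.toBlocks₁₂ ^ 2 :=
        l2_opNorm_conjTranspose_mul_mul_self_le _ _
    _ ≤ 1 / δ' * opNorm A.toBlocks₁₂ ^ 2 := by gcongr
    _ = opNorm A.toBlocks₁₂ ^ 2 / δ' := by ring

/-- Parlett, Theorem 9.5.1: block-diagonal-dominance estimate for a
Hermitian matrix whose trailing eigenvalues all equal `λ`. -/
theorem parlett_block_estimate
    {r s : ℕ} (A : Matrix (Fin r ⊕ Fin s) (Fin r ⊕ Fin s) ℂ) (hA : A.IsHermitian)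
    (lam : Fin r ⊕ Fin s → ℝ) (lam0 : ℝ)
    (hspec : ∃ U ∈ Matrix.unitaryGroup (Fin r ⊕ Fin s) ℂ,
      A = U * Matrix.diagonal (fun i => (lam i : ℂ)) * Uᴴ)
    (htail : ∀ j : Fin s, lam (Sum.inr j) = lam0)
    (hinj : Function.Injective fun i : Fin r => lam (Sum.inl i))
    (hne : ∀ i : Fin r, lam (Sum.inl i) ≠ lam0)
    (δ' : ℝ) (hδ' : 0 < δ')
    (hunit : IsUnit (A.toBlocks₁₁ - (lam0 : ℂ) • 1))
    (hnorm : opNorm (A.toBlocks₁₁ - (lam0 : ℂ) • 1)⁻¹ < 1 / δ') :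
    opNorm (A.toBlocks₂₂ - (lam0 : ℂ) • 1) ≤ opNorm A.toBlocks₁₂ ^ 2 / δ' :=
  parlett_block_estimate_general A hA lam lam0 hspec htail δ' hunit hnorm

end
end

section
/- Let δ > 0, let a ≥ 0 and d ∈ ℝ with |d| ≥ δ, and let θ ∈ [0, π/4) satisfy tan(2θ) = 2a/|d|. Then for every real τ: sin²(θ + τ) ≤ a²/δ² + 2·|τ|·a/δ + τ². -/
open Real Set

/-- perturbation bound on `sin²` of a Jacobi rotation angle
`θ ∈ [0, π/4)` with `tan(2θ) = 2a/|d|`, `|d| ≥ δ`. -/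
theorem sin_sq_of_perturbed_jacobi_angle
    (δ a d : ℝ) (hδ : 0 < δ) (ha : 0 ≤ a) (hd : δ ≤ |d|)
    (θ : ℝ) (hθ : θ ∈ Set.Ico 0 (π / 4))
    (htan : Real.tan (2 * θ) = 2 * a / |d|) (τ : ℝ) :
    Real.sin (θ + τ) ^ 2 ≤ a ^ 2 / δ ^ 2 + 2 * |τ| * a / δ + τ ^ 2 := by
  obtain ⟨hθ0, hθ4⟩ := hθ
  have hd0 : (0:ℝ) < |d| := lt_of_lt_of_le hδ hd
  have hπ : θ < π / 2 := hθ4.trans (by linarith [Real.pi_pos])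
  have hcos : 0 < Real.cos θ := Real.cos_pos_of_mem_Ioo ⟨by linarith [Real.pi_pos], hπ⟩
  have hsin0 : 0 ≤ Real.sin θ :=
    Real.sin_nonneg_of_nonneg_of_le_pi hθ0 (by linarith [Real.pi_pos])
  have ht0 : 0 ≤ Real.tan θ := by
    rw [Real.tan_eq_sin_div_cos]; positivity
  have ht1 : Real.tan θ < 1 := by
    have := Real.tan_lt_tan_of_nonneg_of_lt_pi_div_two hθ0
      (by linarith [Real.pi_pos]) hθ4
    simpa [Real.tan_pi_div_four] using this
  have htan2 : Real.tan (2 * θ) = 2 * Real.tan θ / (1 - Real.tan θ ^ 2) :=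
    Real.tan_two_mul
  have hden : 0 < 1 - Real.tan θ ^ 2 := by nlinarith
  have key : Real.tan θ ≤ a / δ := by
    have h1 : 2 * Real.tan θ ≤ 2 * Real.tan θ / (1 - Real.tan θ ^ 2) := by
      rw [le_div_iff₀ hden]; nlinarith
    have h2 : 2 * Real.tan θ ≤ 2 * a / |d| := by rw [← htan, htan2]; exact h1
    have h3 : 2 * a / |d| ≤ 2 * a / δ := by
      apply div_le_div_of_nonneg_left (by linarith) hδ hd
    have h4 : 2 * Real.tan θ ≤ 2 * (a / δ) := by
      calc 2 * Real.tan θ ≤ 2 * a / |d| := h2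
        _ ≤ 2 * a / δ := h3
        _ = 2 * (a / δ) := by ring
    linarith
  have hsin : Real.sin θ ≤ a / δ := by
    have : Real.sin θ ≤ Real.tan θ := by
      rw [Real.tan_eq_sin_div_cos, le_div_iff₀ hcos]
      nlinarith [Real.cos_le_one θ]
    linarith
  have habs : |Real.sin (θ + τ)| ≤ a / δ + |τ| := by
    rw [Real.sin_add]
    have b1 : |Real.sin θ * Real.cos τ| ≤ Real.sin θ := by
      rw [abs_mul, abs_of_nonneg hsin0]
      nlinarith [Real.abs_cos_le_one τ, abs_nonneg (Real.cos τ)]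
    have b2 : |Real.cos θ * Real.sin τ| ≤ |τ| := by
      rw [abs_mul]
      calc |Real.cos θ| * |Real.sin τ| ≤ 1 * |Real.sin τ| := by
            have := Real.abs_cos_le_one θ
            nlinarith [abs_nonneg (Real.sin τ)]
        _ = |Real.sin τ| := one_mul _
        _ ≤ |τ| := Real.abs_sin_le_abs
    calc |Real.sin θ * Real.cos τ + Real.cos θ * Real.sin τ|
        ≤ |Real.sin θ * Real.cos τ| + |Real.cos θ * Real.sin τ| := abs_add_le _ _
      _ ≤ a / δ + |τ| := by linarith
  have hsq : Real.sin (θ + τ) ^ 2 ≤ (a / δ + |τ|) ^ 2 := by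
    rw [← sq_abs (Real.sin (θ + τ))]
    exact pow_le_pow_left₀ (abs_nonneg _) habs 2
  have hexp : (a / δ + |τ|) ^ 2 = a ^ 2 / δ ^ 2 + 2 * |τ| * a / δ + τ ^ 2 := by
    rw [add_sq, div_pow, sq_abs]; ring
  linarith [hsq, hexp.le, hexp.ge]
end

section
/- For every real x and every real ε with |ε| < π/2: |½·arctan(x·cos ε) − ½·arctan(x)| ≤ ε²·|x|/(1 + x²·cos²(ε)), and consequently |½·arctan(x·cos ε) − ½·arctan(x)| ≤ ε²/cos(ε). -/
open Real

lemma my_arctan_le_self (t : ℝ) (h : 0 ≤ t) : Real.arctan t ≤ t := by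
  have h0 : 0 ≤ Real.arctan t := by
    simpa using Real.arctan_strictMono.monotone h
  calc Real.arctan t ≤ Real.tan (Real.arctan t) :=
        Real.le_tan h0 (Real.arctan_lt_pi_div_two t)
    _ = t := Real.tan_arctan t

lemma my_abs_arctan_le (t : ℝ) : |Real.arctan t| ≤ |t| := by
  rcases le_total 0 t with h | h
  · rw [abs_of_nonneg (by simpa using Real.arctan_strictMono.monotone h), abs_of_nonneg h]
    exact my_arctan_le_self t h
  · rw [abs_of_nonpos (by simpa using Real.arctan_strictMono.monotone h), abs_of_nonpos h]
    have := my_arctan_le_self (-t) (by linarith)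
    rw [Real.arctan_neg] at this
    linarith

/-- perturbation of the half-arctangent when its argument is multiplied
by `cos ε`. -/
theorem half_arctan_cos_perturbation (x ε : ℝ) (hε : |ε| < π / 2) :
    |(1 / 2) * Real.arctan (x * Real.cos ε) - (1 / 2) * Real.arctan x| ≤
      ε ^ 2 * |x| / (1 + x ^ 2 * Real.cos ε ^ 2) ∧
    |(1 / 2) * Real.arctan (x * Real.cos ε) - (1 / 2) * Real.arctan x| ≤
      ε ^ 2 / Real.cos ε := by
  set c := Real.cos ε with hc
  have hc0 : 0 < c := Real.cos_pos_of_mem_Ioo ⟨by cases abs_lt.mp hε; linarith, (abs_lt.mp hε).2⟩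
  have hc1 : c ≤ 1 := Real.cos_le_one ε
  -- arctan subtraction formula
  have hprod : (x * c) * (-x) < 1 := by nlinarith [sq_nonneg x]
  have hsub : Real.arctan (x * c) - Real.arctan x =
      Real.arctan ((x * c - x) / (1 + x ^ 2 * c)) := by
    have h := Real.arctan_add hprod
    rw [Real.arctan_neg] at h
    have heq : (x * c + -x) / (1 - x * c * -x) = (x * c - x) / (1 + x ^ 2 * c) := by ring_nf
    rw [heq] at h
    linarith
  have h1c : 1 - c ≤ ε ^ 2 / 2 := by
    have := Real.one_sub_sq_div_two_le_cos (x := ε)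
    linarith
  have hden : (0:ℝ) < 1 + x ^ 2 * c := by nlinarith [sq_nonneg x]
  have hden2 : (0:ℝ) < 1 + x ^ 2 * c ^ 2 := by nlinarith [sq_nonneg x]
  have key : |Real.arctan (x * c) - Real.arctan x| ≤ |x| * (ε ^ 2 / 2) / (1 + x ^ 2 * c) := by
    rw [hsub]
    calc |Real.arctan ((x * c - x) / (1 + x ^ 2 * c))| ≤ |(x * c - x) / (1 + x ^ 2 * c)| :=
          my_abs_arctan_le _
      _ = |x| * (1 - c) / (1 + x ^ 2 * c) := by
          rw [abs_div, abs_of_pos hden]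
          congr 1
          rw [show x * c - x = -(x * (1 - c)) by ring, abs_neg, abs_mul,
            abs_of_nonneg (by linarith : (0:ℝ) ≤ 1 - c)]
      _ ≤ |x| * (ε ^ 2 / 2) / (1 + x ^ 2 * c) := by
          gcongr
  have half : |(1 / 2) * Real.arctan (x * c) - (1 / 2) * Real.arctan x|
      = (1 / 2) * |Real.arctan (x * c) - Real.arctan x| := by
    rw [← mul_sub, abs_mul]
    norm_num
  have hfirst : |(1 / 2) * Real.arctan (x * c) - (1 / 2) * Real.arctan x| ≤
      ε ^ 2 * |x| / (1 + x ^ 2 * c ^ 2) := by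
    rw [half]
    have hstep : |x| * (ε ^ 2 / 2) / (1 + x ^ 2 * c) ≤ |x| * (ε ^ 2 / 2) / (1 + x ^ 2 * c ^ 2) := by
      gcongr
      nlinarith [mul_nonneg (mul_nonneg (sq_nonneg x) hc0.le) (sub_nonneg.mpr hc1)]
    calc (1:ℝ)/2 * |Real.arctan (x * c) - Real.arctan x|
        ≤ (1/2) * (|x| * (ε ^ 2 / 2) / (1 + x ^ 2 * c ^ 2)) := by
          apply mul_le_mul_of_nonneg_left (key.trans hstep) (by norm_num)
      _ = ε ^ 2 * |x| / 4 / (1 + x ^ 2 * c ^ 2) := by ring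
      _ ≤ ε ^ 2 * |x| / (1 + x ^ 2 * c ^ 2) := by
          gcongr
          nlinarith [mul_nonneg (sq_nonneg ε) (abs_nonneg x)]
  refine ⟨hfirst, hfirst.trans ?_⟩
  rw [div_le_div_iff₀ hden2 hc0]
  have h2 : 2 * (|x| * c) ≤ 1 + x ^ 2 * c ^ 2 := by nlinarith [sq_nonneg (|x| * c - 1), sq_abs x]
  nlinarith [sq_nonneg ε, mul_nonneg (sq_nonneg ε) (mul_nonneg (abs_nonneg x) hc0.le)]
end

section
/- Let A be an n×n complex Hermitian matrix with eigenvalues λ_1, …, λ_n listed with multiplicity. Then there exists a permutation σ of {1,…,n} such that |A_{i,i} − λ_{σ(i)}| ≤ √2·P(A) for every i, where A_{i,i} are the (real) diagonal entries of A. -/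
/-! Write `A = U diag(λ) Uᴴ`. The matrix `S = (|U_ij|²)` is doubly stochastic and the diagonal
of `A` is `S λ`, so by Birkhoff's theorem some permutation `σ` satisfies
`∑ᵢ (A_ii - λ_σ(i))² ≤ ∑ᵢⱼ S_ij (A_ii - λ_j)² = ∑ⱼ λ_j² - ∑ᵢ A_ii²`. By unitary invariance of the
Frobenius norm, the right-hand side is the squared Frobenius norm of the off-diagonal part of `A`,
namely `2 P(A)²`, and it bounds every single term on the left. -/

open Matrix Real Complex Finset Filter

noncomputable section

section DoublyStochastic

variable {R n : Type*} [Field R] [LinearOrder R] [IsStrictOrderedRing R] [Fintype n]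
  [DecidableEq n] {S : Matrix n n R}

theorem exists_perm_sum_le_of_mem_doublyStochastic (hS : S ∈ doublyStochastic R n)
    (c : n → n → R) : ∃ σ : Equiv.Perm n, ∑ i, c i (σ i) ≤ ∑ i, ∑ j, S i j * c i j := by
  let F : Matrix n n R →ₗ[R] R := ∑ i, ∑ j, c i j • entryLinearMap R R i j
  have hF (M : Matrix n n R) : F M = ∑ i, ∑ j, M i j * c i j := by
    simp [F, LinearMap.sum_apply, mul_comm]
  rw [← SetLike.mem_coe, doublyStochastic_eq_convexHull_permMatrix] at hS
  obtain ⟨_, ⟨σ, rfl⟩, hσ⟩ :=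
    (F.concaveOn convex_univ).exists_le_of_mem_convexHull (Set.subset_univ _) hS
  refine ⟨σ, ?_⟩
  rw [hF, hF] at hσ
  simpa [Equiv.Perm.permMatrix, PEquiv.toMatrix_apply, Equiv.toPEquiv_apply, eq_comm] using hσ

theorem sum_mul_mulVec_sub_sq_of_mem_doublyStochastic (hS : S ∈ doublyStochastic R n)
    (x : n → R) :
    ∑ i, ∑ j, S i j * ((S *ᵥ x) i - x j) ^ 2 = ∑ j, x j ^ 2 - ∑ i, (S *ᵥ x) i ^ 2 := by
  set d := S *ᵥ x
  have hrow (i : n) : ∑ j, S i j * (d i - x j) ^ 2 = ∑ j, S i j * x j ^ 2 - d i ^ 2 := by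
    have expand (j : n) : S i j * (d i - x j) ^ 2
        = d i ^ 2 * S i j - 2 * d i * (S i j * x j) + S i j * x j ^ 2 := by ring
    have hd : ∑ j, S i j * x j = d i := rfl
    simp only [expand, sum_add_distrib, sum_sub_distrib, ← mul_sum,
      sum_row_of_mem_doublyStochastic hS, hd]
    ring
  simp only [hrow, sum_sub_distrib]
  rw [sum_comm]
  simp only [← sum_mul, sum_col_of_mem_doublyStochastic hS, one_mul]

end DoublyStochastic

namespace Matrix

variable {𝕜 n : Type*} [RCLike 𝕜] [Fintype n]

theorem trace_conjTranspose_mul_self_eq_sum_norm_sq (A : Matrix n n 𝕜) :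
    (Aᴴ * A).trace = ((∑ i, ∑ j, ‖A i j‖ ^ 2 : ℝ) : 𝕜) := by
  simp only [trace, diag_apply, mul_apply, conjTranspose_apply, RCLike.star_def, RCLike.conj_mul]
  push_cast
  exact sum_comm

theorem IsHermitian.sum_norm_sq_eq [LinearOrder n] {A : Matrix n n 𝕜} (hA : A.IsHermitian) :
    ∑ i, ∑ j, ‖A i j‖ ^ 2
      = ∑ i, RCLike.re (A i i) ^ 2 + 2 * ∑ l, ∑ m, if l < m then ‖A l m‖ ^ 2 else 0 := by
  have hdiag (i : n) : ‖A i i‖ ^ 2 = RCLike.re (A i i) ^ 2 := by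
    rw [← hA.coe_re_apply_self i, RCLike.norm_ofReal, sq_abs, RCLike.ofReal_re]
  have hsymm (i j : n) : ‖A j i‖ = ‖A i j‖ := by rw [← hA.apply i j, norm_star]
  have hsplit (i j : n) : ‖A i j‖ ^ 2 = (if i = j then RCLike.re (A i i) ^ 2 else 0)
      + (if i < j then ‖A i j‖ ^ 2 else 0) + (if j < i then ‖A j i‖ ^ 2 else 0) := by
    rcases lt_trichotomy i j with h | rfl | h
    · simp [h, h.ne, h.not_gt]
    · simp [hdiag]
    · simp [h, h.ne', h.not_gt, hsymm]
  refine (sum_congr rfl fun i _ => sum_congr rfl fun j _ => hsplit i j).trans ?_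
  simp only [sum_add_distrib, sum_ite_eq, mem_univ, if_true]
  rw [sum_comm (f := fun i j => if j < i then ‖A j i‖ ^ 2 else 0)]
  ring

variable [DecidableEq n]

theorem norm_sq_mem_doublyStochastic_of_mem_unitaryGroup {U : Matrix n n 𝕜}
    (hU : U ∈ unitaryGroup n 𝕜) : (of fun i j => ‖U i j‖ ^ 2) ∈ doublyStochastic ℝ n := by
  rw [mem_doublyStochastic_iff_sum]
  refine ⟨fun _ _ => sq_nonneg _, fun i => ?_, fun j => ?_⟩
  · have h := congr_fun₂ (mem_unitaryGroup_iff.mp hU) i i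
    simp only [mul_apply, star_apply, RCLike.star_def, RCLike.mul_conj, one_apply_eq] at h
    exact_mod_cast h
  · have h := congr_fun₂ (mem_unitaryGroup_iff'.mp hU) j j
    simp only [mul_apply, star_apply, RCLike.star_def, RCLike.conj_mul, one_apply_eq] at h
    exact_mod_cast h

theorem mul_diagonal_mul_conjTranspose_apply_self (U : Matrix n n 𝕜) (lam : n → ℝ) (i : n) :
    (U * diagonal (fun j => (lam j : 𝕜)) * Uᴴ) i i = ((∑ j, ‖U i j‖ ^ 2 * lam j : ℝ) : 𝕜) := by
  rw [mul_apply]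
  simp only [mul_diagonal, conjTranspose_apply, RCLike.star_def]
  push_cast
  refine sum_congr rfl fun j _ => ?_
  rw [← RCLike.mul_conj]
  ring

theorem sum_norm_sq_mul_mul_conjTranspose_of_mem_unitaryGroup {U : Matrix n n 𝕜}
    (hU : U ∈ unitaryGroup n 𝕜) (B : Matrix n n 𝕜) :
    ∑ i, ∑ j, ‖(U * B * Uᴴ) i j‖ ^ 2 = ∑ i, ∑ j, ‖B i j‖ ^ 2 := by
  have hUU : Uᴴ * U = 1 := mem_unitaryGroup_iff'.mp hU
  have h : ((U * B * Uᴴ)ᴴ * (U * B * Uᴴ)).trace = (Bᴴ * B).trace := by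
    simp only [conjTranspose_mul, conjTranspose_conjTranspose, Matrix.mul_assoc]
    rw [← Matrix.mul_assoc Uᴴ U, hUU, Matrix.one_mul, trace_mul_comm, Matrix.mul_assoc,
      Matrix.mul_assoc, hUU, Matrix.mul_one]
  rw [trace_conjTranspose_mul_self_eq_sum_norm_sq, trace_conjTranspose_mul_self_eq_sum_norm_sq] at h
  exact_mod_cast h

theorem sum_norm_sq_diagonal_ofReal (lam : n → ℝ) :
    ∑ i, ∑ j, ‖diagonal (fun j => (lam j : 𝕜)) i j‖ ^ 2 = ∑ j, lam j ^ 2 := by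
  simp [diagonal_apply, apply_ite]

end Matrix

/-- Henrici's diagonal–eigenvalue affiliation bound: some permutation of
the eigenvalues is within `√2·P(A)` of the corresponding diagonal entries. -/
theorem diagonal_eigenvalue_affiliation
    {n : ℕ} (A : Matrix (Fin n) (Fin n) ℂ) (hA : A.IsHermitian)
    (lam : Fin n → ℝ)
    (hspec : ∃ U ∈ Matrix.unitaryGroup (Fin n) ℂ,
      A = U * Matrix.diagonal (fun i => (lam i : ℂ)) * Uᴴ) :
    ∃ σ : Equiv.Perm (Fin n), ∀ i : Fin n,
      |(A i i).re - lam (σ i)| ≤ Real.sqrt 2 * offP A := by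
  obtain ⟨U, hU, hAU⟩ := hspec
  set S : Matrix (Fin n) (Fin n) ℝ := of fun i j => ‖U i j‖ ^ 2
  have hS : S ∈ doublyStochastic ℝ (Fin n) :=
    norm_sq_mem_doublyStochastic_of_mem_unitaryGroup hU
  have hdiag (i : Fin n) : (A i i).re = (S *ᵥ lam) i := by
    have hAii : A i i = ((S *ᵥ lam) i : ℂ) :=
      hAU ▸ mul_diagonal_mul_conjTranspose_apply_self U lam i
    rw [hAii, Complex.ofReal_re]
  have hfrob : ∑ i, ∑ j, ‖A i j‖ ^ 2 = ∑ j, lam j ^ 2 := by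
    rw [hAU, sum_norm_sq_mul_mul_conjTranspose_of_mem_unitaryGroup hU]
    exact sum_norm_sq_diagonal_ofReal lam
  have hoff : ∑ j, lam j ^ 2 - ∑ i, (S *ᵥ lam) i ^ 2 = 2 * offP A ^ 2 := by
    rw [offP, Real.sq_sqrt (by positivity), ← hfrob, hA.sum_norm_sq_eq]
    simp only [RCLike.re_to_complex, hdiag, add_sub_cancel_left]
  obtain ⟨σ, hσ⟩ := exists_perm_sum_le_of_mem_doublyStochastic hS
    fun i j => ((S *ᵥ lam) i - lam j) ^ 2
  rw [sum_mul_mulVec_sub_sq_of_mem_doublyStochastic hS, hoff] at hσ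
  refine ⟨σ, fun i => ?_⟩
  rw [hdiag]
  calc |(S *ᵥ lam) i - lam (σ i)| = √(((S *ᵥ lam) i - lam (σ i)) ^ 2) :=
        (Real.sqrt_sq_eq_abs _).symm
    _ ≤ √(2 * offP A ^ 2) := Real.sqrt_le_sqrt <|
        (single_le_sum (f := fun j => ((S *ᵥ lam) j - lam (σ j)) ^ 2)
          (fun _ _ => sq_nonneg _) (mem_univ i)).trans hσ
    _ = √2 * offP A := by
      rw [Real.sqrt_mul zero_le_two, Real.sqrt_sq (x := offP A) (Real.sqrt_nonneg _)]

end
end
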